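/- (Andrews's polynomial Lebesgue identity) For every nonnegative integer L, ∑_{i,j≥0} q^{T_i+T_j} (-z^2)^j [L-j choose i]_q [i choose j]_q = ∑_{j≥0} (z^2 q^2; q^2)_j q^{T_{L-2j-1}} [L+1 choose 2j+1]_q, where T_n = n(n+1)/2 and T_{-1} = 0 by convention. -/
import Mathlib


/-- The q-Pochhammer symbol `(a;q)_n = ∏_{m=0}^{n-1} (1 - a q^m)`. -/
noncomputable def qPoch {K : Type*} [Field K] (a q : K) (n : ℕ) : K :=
  ∏ m ∈ Finset.range n, (1 - a * q ^ m)

/-- The Gaussian binomial coefficient `[m choose n]_q`, interpreted as `0`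
when `n < 0` or `m < n`. -/
noncomputable def qbinom {K : Type*} [Field K] (q : K) (m n : ℤ) : K :=
  if 0 ≤ n ∧ n ≤ m then
    qPoch q q m.toNat / (qPoch q q n.toNat * qPoch q q (m - n).toNat)
  else 0

/-- Triangular numbers `T n = n(n+1)/2`. -/
def T (n : ℕ) : ℕ := n * (n + 1) / 2

lemma two_T (n : ℕ) : 2 * T n = n * (n + 1) := by
  unfold T
  exact Nat.mul_div_cancel' (Nat.even_mul_succ_self n).two_dvd

lemma T_succ (n : ℕ) : T (n + 1) = T n + (n + 1) := by
  have h1 := two_T n; have h2 := two_T (n+1)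
  have h3 : (n+1)*((n+1)+1) = n*(n+1) + 2*(n+1) := by ring
  omega

lemma T_ge (n : ℕ) : n ≤ T n := by
  induction n with
  | zero => simp [T]
  | succ k ih => rw [T_succ]; omega

section Field
variable {K : Type*} [Field K] (q : K)

lemma qPoch_zero (a : K) : qPoch a q 0 = 1 := by simp [qPoch]

lemma qPoch_succ (a : K) (n : ℕ) :
    qPoch a q (n + 1) = qPoch a q n * (1 - a * q ^ n) := by
  simp [qPoch, Finset.prod_range_succ]

lemma qPoch_ne_zero {n : ℕ} (h : ∀ k, 1 ≤ k → k ≤ n → q ^ k ≠ 1) :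
    qPoch q q n ≠ 0 := by
  induction n with
  | zero => simp [qPoch_zero]
  | succ m ih =>
    rw [qPoch_succ]
    refine mul_ne_zero (ih fun k hk1 hk2 => h k hk1 (by omega)) ?_
    have : q * q ^ m = q ^ (m + 1) := by ring
    rw [this]
    intro hc
    exact h (m+1) (by omega) le_rfl (by linear_combination -hc)

lemma qbinom_eq_zero {m n : ℤ} (h : ¬ (0 ≤ n ∧ n ≤ m)) : qbinom q m n = 0 := if_neg h

lemma qbinom_nat (m n : ℕ) (h : n ≤ m) :
    qbinom q (m : ℤ) (n : ℤ) =
      qPoch q q m / (qPoch q q n * qPoch q q (m - n)) := by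
  have h1 : ((m : ℤ) - n).toNat = m - n := by omega
  rw [qbinom, if_pos ⟨by positivity, by exact_mod_cast h⟩, h1]
  simp


lemma qbinom_zero' (m : ℕ) (h : ∀ k, 1 ≤ k → k ≤ m → q ^ k ≠ 1) :
    qbinom q (m : ℤ) 0 = 1 := by
  have h0 : ((0:ℕ):ℤ) = (0:ℤ) := rfl
  rw [← h0, qbinom_nat q m 0 (Nat.zero_le m)]
  rw [qPoch_zero, Nat.sub_zero, one_mul, div_self (qPoch_ne_zero q h)]

lemma qbinom_self (m : ℕ) (h : ∀ k, 1 ≤ k → k ≤ m → q ^ k ≠ 1) :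
    qbinom q (m : ℤ) (m : ℤ) = 1 := by
  rw [qbinom_nat q m m le_rfl, Nat.sub_self, qPoch_zero, mul_one,
    div_self (qPoch_ne_zero q h)]

lemma pascalA (m n : ℕ) (h : ∀ k, 1 ≤ k → k ≤ m + 1 → q ^ k ≠ 1) :
    qbinom q ((m:ℤ) + 1) (n:ℤ)
      = qbinom q (m:ℤ) ((n:ℤ) - 1) + q ^ n * qbinom q (m:ℤ) (n:ℤ) := by
  have hm1 : ((m:ℤ) + 1) = ((m+1 : ℕ) : ℤ) := by push_cast; ring
  rw [hm1]
  have hsmall : ∀ k, 1 ≤ k → k ≤ m → q ^ k ≠ 1 := fun k hk1 hk2 => h k hk1 (by omega)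
  match n with
  | 0 =>
    simp only [Nat.cast_zero, zero_sub]
    rw [qbinom_zero' q (m+1) h, qbinom_zero' q m hsmall, qbinom_eq_zero q (by omega)]
    ring
  | (n'+1) =>
    have hcast : ((n'+1 : ℕ):ℤ) - 1 = (n' : ℤ) := by push_cast; ring
    rw [hcast]
    by_cases h1 : n' + 1 ≤ m + 1
    · by_cases h2 : n' + 1 ≤ m
      · -- generic case
        obtain ⟨d, rfl⟩ : ∃ d, m = n' + 1 + d := ⟨m - (n'+1), by omega⟩
        rw [qbinom_nat q _ _ h1, qbinom_nat q _ _ (by omega : n' ≤ n' + 1 + d),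
          qbinom_nat q _ _ h2]
        have e1 : n' + 1 + d + 1 - (n' + 1) = d + 1 := by omega
        have e2 : n' + 1 + d - n' = d + 1 := by omega
        have e3 : n' + 1 + d - (n' + 1) = d := by omega
        rw [e1, e2, e3]
        have hPn : qPoch q q n' ≠ 0 :=
          qPoch_ne_zero q (fun k hk1 hk2 => h k hk1 (by omega))
        have hPd : qPoch q q d ≠ 0 :=
          qPoch_ne_zero q (fun k hk1 hk2 => h k hk1 (by omega))
        have hf1 : (1 : K) - q * q ^ n' ≠ 0 := by
          have := h (n'+1) (by omega) (by omega)
          intro hc; apply this; rw [pow_succ, mul_comm]; linear_combination -hc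
        have hf2 : (1 : K) - q * q ^ d ≠ 0 := by
          have := h (d+1) (by omega) (by omega)
          intro hc; apply this; rw [pow_succ, mul_comm]; linear_combination -hc
        rw [qPoch_succ q q (n' + 1 + d), qPoch_succ q q n', qPoch_succ q q d]
        field_simp
        ring
      · -- n' = m
        have : n' = m := by omega
        subst this
        rw [qbinom_self q (n'+1) h, qbinom_self q n' hsmall,
          qbinom_eq_zero q (show ¬((0:ℤ) ≤ ((n'+1:ℕ):ℤ) ∧ ((n'+1:ℕ):ℤ) ≤ ((n':ℕ):ℤ)) by
            rintro ⟨hh1, hh2⟩; omega)]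
        ring
    · rw [qbinom_eq_zero q (by rintro ⟨hh1, hh2⟩; omega),
        qbinom_eq_zero q (by rintro ⟨hh1, hh2⟩; omega),
        qbinom_eq_zero q (by rintro ⟨hh1, hh2⟩; omega)]
      ring

lemma pascalB (m n : ℕ) (h : ∀ k, 1 ≤ k → k ≤ m + 1 → q ^ k ≠ 1) :
    qbinom q ((m:ℤ) + 1) (n:ℤ)
      = q ^ (m + 1 - n) * qbinom q (m:ℤ) ((n:ℤ) - 1) + qbinom q (m:ℤ) (n:ℤ) := by
  have hm1 : ((m:ℤ) + 1) = ((m+1 : ℕ) : ℤ) := by push_cast; ring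
  rw [hm1]
  have hsmall : ∀ k, 1 ≤ k → k ≤ m → q ^ k ≠ 1 := fun k hk1 hk2 => h k hk1 (by omega)
  match n with
  | 0 =>
    simp only [Nat.cast_zero, zero_sub, Nat.sub_zero]
    rw [qbinom_zero' q (m+1) h, qbinom_zero' q m hsmall, qbinom_eq_zero q (by omega)]
    ring
  | (n'+1) =>
    have hcast : ((n'+1 : ℕ):ℤ) - 1 = (n' : ℤ) := by push_cast; ring
    rw [hcast]
    by_cases h1 : n' + 1 ≤ m + 1
    · by_cases h2 : n' + 1 ≤ m
      · obtain ⟨d, rfl⟩ : ∃ d, m = n' + 1 + d := ⟨m - (n'+1), by omega⟩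
        rw [qbinom_nat q _ _ h1, qbinom_nat q _ _ (by omega : n' ≤ n' + 1 + d),
          qbinom_nat q _ _ h2]
        have e1 : n' + 1 + d + 1 - (n' + 1) = d + 1 := by omega
        have e2 : n' + 1 + d - n' = d + 1 := by omega
        have e3 : n' + 1 + d - (n' + 1) = d := by omega
        rw [e1, e2, e3]
        have hPn : qPoch q q n' ≠ 0 :=
          qPoch_ne_zero q (fun k hk1 hk2 => h k hk1 (by omega))
        have hPd : qPoch q q d ≠ 0 :=
          qPoch_ne_zero q (fun k hk1 hk2 => h k hk1 (by omega))
        have hf1 : (1 : K) - q * q ^ n' ≠ 0 := by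
          have := h (n'+1) (by omega) (by omega)
          intro hc; apply this; rw [pow_succ, mul_comm]; linear_combination -hc
        have hf2 : (1 : K) - q * q ^ d ≠ 0 := by
          have := h (d+1) (by omega) (by omega)
          intro hc; apply this; rw [pow_succ, mul_comm]; linear_combination -hc
        rw [qPoch_succ q q (n' + 1 + d), qPoch_succ q q n', qPoch_succ q q d]
        field_simp
        ring
      · have : n' = m := by omega
        subst this
        have e5 : n' + 1 - (n' + 1) = 0 := by omega
        rw [e5, qbinom_self q (n'+1) h, qbinom_self q n' hsmall,
          qbinom_eq_zero q (show ¬((0:ℤ) ≤ ((n'+1:ℕ):ℤ) ∧ ((n'+1:ℕ):ℤ) ≤ ((n':ℕ):ℤ)) by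
            rintro ⟨hh1, hh2⟩; omega)]
        ring
    · rw [qbinom_eq_zero q (by rintro ⟨hh1, hh2⟩; omega),
        qbinom_eq_zero q (by rintro ⟨hh1, hh2⟩; omega),
        qbinom_eq_zero q (by rintro ⟨hh1, hh2⟩; omega)]
      ring

lemma sum_shift {g : ℕ → K} {N : ℕ} (h0 : g 0 = 0) (hN : g N = 0) :
    ∑ x ∈ Finset.range N, g x = ∑ x ∈ Finset.range N, g (x + 1) := by
  match N with
  | 0 => rfl
  | (M+1) =>
    rw [Finset.sum_range_succ' g M, Finset.sum_range_succ (fun x => g (x + 1)) M, h0, hN]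


noncomputable def st (q w : K) (L i j : ℕ) : K :=
  q ^ (T i + T j) * (-w) ^ j * qbinom q ((L:ℤ) - (j:ℤ)) (i:ℤ) * qbinom q (i:ℤ) (j:ℤ)

noncomputable def SS (q w : K) (L N : ℕ) : K :=
  ∑ j ∈ Finset.range N, ∑ i ∈ Finset.range N, st q w L i j

noncomputable def p1 (q w : K) (L i j : ℕ) : K :=
  q ^ (T i + T j) * (-w) ^ j *
    (q ^ (L + 2 - j - i) * qbinom q ((L:ℤ) + 1 - (j:ℤ)) ((i:ℤ) - 1)) *
    qbinom q (i:ℤ) (j:ℤ)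

noncomputable def E1 (q w : K) (L i j : ℕ) : K :=
  q ^ (T i + (T j - j)) * (-w) ^ j * qbinom q ((L:ℤ) + 1 - (j:ℤ)) (i:ℤ) *
    qbinom q (i:ℤ) ((j:ℤ) - 1)

lemma st_cast (w : K) (L i j : ℕ) :
    st q w (L+1) i j
      = q ^ (T i + T j) * (-w) ^ j * qbinom q ((L:ℤ) + 1 - (j:ℤ)) (i:ℤ) *
          qbinom q (i:ℤ) (j:ℤ) := by
  unfold st
  norm_num [show ((L+1:ℕ):ℤ) = (L:ℤ)+1 from by push_cast; ring]

lemma S_rec (w : K) (L : ℕ) (hq : ∀ n, 1 ≤ n → n ≤ L + 3 → q ^ n ≠ 1) :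
    SS q w (L+2) (L+3)
      = (1 + q ^ (L+2)) * SS q w (L+1) (L+3) - w * q ^ (L+2) * SS q w L (L+3) := by
  have step1 : ∀ j ∈ Finset.range (L+3), ∀ i ∈ Finset.range (L+3),
      st q w (L+2) i j = st q w (L+1) i j + p1 q w L i j := by
    intro j hj i hi
    by_cases hj2 : j ≤ L + 1
    · unfold st p1
      rw [show ((L+2:ℕ):ℤ) - (j:ℤ) = ((L+1-j:ℕ):ℤ) + 1 from by omega]
      rw [pascalB q (L+1-j) i (fun k hk1 hk2 => hq k hk1 (by omega))]
      rw [show ((L+1-j:ℕ):ℤ) = (L:ℤ) + 1 - (j:ℤ) from by omega]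
      rw [show ((L+1:ℕ):ℤ) - (j:ℤ) = (L:ℤ) + 1 - (j:ℤ) from by push_cast; ring]
      rw [show L + 1 - j + 1 - i = L + 2 - j - i from by omega]
      ring
    · have hj3 : j = L + 2 := by simp only [Finset.mem_range] at hj; omega
      subst hj3
      have z1 : qbinom q ((L:ℤ) + 1 - ((L+2:ℕ):ℤ)) ((i:ℤ) - 1) = 0 :=
        qbinom_eq_zero q (by push_cast; omega)
      have z2 : qbinom q (((L+1:ℕ):ℤ) - ((L+2:ℕ):ℤ)) (i:ℤ) = 0 :=
        qbinom_eq_zero q (by push_cast; omega)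
      have z3 : st q w (L+2) i (L+2) = 0 := by
        unfold st
        by_cases hii : i = L + 2
        · subst hii
          rw [show (((L+2:ℕ)):ℤ) - ((L+2:ℕ):ℤ) = (0:ℤ) from by push_cast; ring]
          rw [qbinom_eq_zero q (n := ((L+2:ℕ):ℤ)) (m := 0) (by push_cast; omega)]
          ring
        · have hii2 : i < L + 2 := by simp only [Finset.mem_range] at hi; omega
          rw [qbinom_eq_zero q (n := ((L+2:ℕ):ℤ)) (m := (i:ℤ)) (by push_cast; omega)]
          ring
      rw [z3]
      unfold st p1
      rw [z1, z2]
      ring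
  have step2 : SS q w (L+2) (L+3)
      = SS q w (L+1) (L+3)
        + ∑ j ∈ Finset.range (L+3), ∑ i ∈ Finset.range (L+3), p1 q w L i j := by
    unfold SS
    rw [← Finset.sum_add_distrib]
    refine Finset.sum_congr rfl fun j hj => ?_
    rw [← Finset.sum_add_distrib]
    exact Finset.sum_congr rfl fun i hi => step1 j hj i hi
  have step3 : ∀ j ∈ Finset.range (L+3),
      (∑ i ∈ Finset.range (L+3), p1 q w L i j)
        = ∑ i ∈ Finset.range (L+3), p1 q w L (i+1) j := by
    intro j hj
    refine sum_shift ?_ ?_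
    · unfold p1
      rw [show (((0:ℕ)):ℤ) - 1 = (-1:ℤ) from by norm_num]
      rw [qbinom_eq_zero q (n := (-1:ℤ)) (m := (L:ℤ)+1-(j:ℤ)) (by omega)]
      ring
    · unfold p1
      rw [qbinom_eq_zero q (n := ((L+3:ℕ):ℤ)-1) (m := (L:ℤ)+1-(j:ℤ)) (by push_cast; omega)]
      ring
  have step4 : ∀ j ∈ Finset.range (L+3), ∀ i ∈ Finset.range (L+3),
      p1 q w L (i+1) j = q ^ (L+2) * (E1 q w L i j + st q w (L+1) i j) := by
    intro j hj i hi
    simp only [Finset.mem_range] at hj hi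
    rw [st_cast]
    unfold p1 E1
    rw [show (((i+1:ℕ)):ℤ) - 1 = (i:ℤ) from by push_cast; ring]
    by_cases hle : (i:ℤ) ≤ (L:ℤ) + 1 - (j:ℤ)
    · rw [show (((i+1:ℕ)):ℤ) = (i:ℤ) + 1 from by push_cast; ring]
      rw [pascalA q i j (fun k hk1 hk2 => hq k hk1 (by omega))]
      have hE : T (i+1) + T j + (L + 2 - j - (i+1)) = (L+2) + (T i + (T j - j)) := by
        have h1 := T_succ i
        have h2 := T_ge j
        omega
      have hE2 : T i + (T j - j) + j = T i + T j := by
        have := T_ge j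
        omega
      calc q ^ (T (i+1) + T j) * (-w) ^ j *
            (q ^ (L + 2 - j - (i+1)) * qbinom q ((L:ℤ) + 1 - (j:ℤ)) (i:ℤ)) *
            (qbinom q (i:ℤ) ((j:ℤ) - 1) + q ^ j * qbinom q (i:ℤ) (j:ℤ))
          = q ^ (T (i+1) + T j + (L + 2 - j - (i+1))) * ((-w) ^ j *
              qbinom q ((L:ℤ) + 1 - (j:ℤ)) (i:ℤ) *
              (qbinom q (i:ℤ) ((j:ℤ) - 1) + q ^ j * qbinom q (i:ℤ) (j:ℤ))) := by
            rw [pow_add, pow_add]; ring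
        _ = q ^ ((L+2) + (T i + (T j - j))) * ((-w) ^ j *
              qbinom q ((L:ℤ) + 1 - (j:ℤ)) (i:ℤ) *
              (qbinom q (i:ℤ) ((j:ℤ) - 1) + q ^ j * qbinom q (i:ℤ) (j:ℤ))) := by
            rw [hE]
        _ = q ^ (L+2) * (q ^ (T i + (T j - j)) * (-w) ^ j *
                qbinom q ((L:ℤ) + 1 - (j:ℤ)) (i:ℤ) * qbinom q (i:ℤ) ((j:ℤ) - 1)
              + q ^ (T i + (T j - j) + j) * (-w) ^ j *
                qbinom q ((L:ℤ) + 1 - (j:ℤ)) (i:ℤ) * qbinom q (i:ℤ) (j:ℤ)) := by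
            rw [pow_add, pow_add, pow_add]; ring
        _ = q ^ (L+2) * (q ^ (T i + (T j - j)) * (-w) ^ j *
                qbinom q ((L:ℤ) + 1 - (j:ℤ)) (i:ℤ) * qbinom q (i:ℤ) ((j:ℤ) - 1)
              + q ^ (T i + T j) * (-w) ^ j *
                qbinom q ((L:ℤ) + 1 - (j:ℤ)) (i:ℤ) * qbinom q (i:ℤ) (j:ℤ)) := by
            rw [hE2]
    · rw [qbinom_eq_zero q (n := (i:ℤ)) (m := (L:ℤ)+1-(j:ℤ)) (by omega)]
      ring
  have step6 : ∑ j ∈ Finset.range (L+3), ∑ i ∈ Finset.range (L+3), E1 q w L i j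
      = -w * SS q w L (L+3) := by
    have hsh : ∑ j ∈ Finset.range (L+3), ∑ i ∈ Finset.range (L+3), E1 q w L i j
        = ∑ j ∈ Finset.range (L+3), ∑ i ∈ Finset.range (L+3), E1 q w L i (j+1) := by
      refine sum_shift ?_ ?_
      · refine Finset.sum_eq_zero fun i hi => ?_
        unfold E1
        rw [show (((0:ℕ)):ℤ) - 1 = (-1:ℤ) from by norm_num]
        rw [qbinom_eq_zero q (n := (-1:ℤ)) (m := (i:ℤ)) (by omega)]
        ring
      · refine Finset.sum_eq_zero fun i hi => ?_
        unfold E1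
        rw [qbinom_eq_zero q (n := (i:ℤ)) (m := (L:ℤ)+1-((L+3:ℕ):ℤ)) (by push_cast; omega)]
        ring
    rw [hsh]
    unfold SS
    rw [Finset.mul_sum]
    refine Finset.sum_congr rfl fun j hj => ?_
    rw [Finset.mul_sum]
    refine Finset.sum_congr rfl fun i hi => ?_
    unfold E1 st
    rw [show (((j+1:ℕ)):ℤ) - 1 = (j:ℤ) from by push_cast; ring]
    rw [show (L:ℤ) + 1 - ((j+1:ℕ):ℤ) = (L:ℤ) - (j:ℤ) from by push_cast; ring]
    have hE3 : T (j+1) - (j+1) = T j := by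
      have := T_succ j
      omega
    rw [hE3]
    rw [pow_succ]
    ring
  have step5 : ∑ j ∈ Finset.range (L+3), ∑ i ∈ Finset.range (L+3), p1 q w L i j
      = q ^ (L+2) * (-w * SS q w L (L+3) + SS q w (L+1) (L+3)) := by
    calc ∑ j ∈ Finset.range (L+3), ∑ i ∈ Finset.range (L+3), p1 q w L i j
        = ∑ j ∈ Finset.range (L+3), ∑ i ∈ Finset.range (L+3), p1 q w L (i+1) j :=
          Finset.sum_congr rfl step3
      _ = ∑ j ∈ Finset.range (L+3), ∑ i ∈ Finset.range (L+3),
            q ^ (L+2) * (E1 q w L i j + st q w (L+1) i j) := by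
          refine Finset.sum_congr rfl fun j hj => Finset.sum_congr rfl fun i hi => ?_
          exact step4 j hj i hi
      _ = q ^ (L+2) * ((∑ j ∈ Finset.range (L+3), ∑ i ∈ Finset.range (L+3), E1 q w L i j)
            + SS q w (L+1) (L+3)) := by
          unfold SS
          simp only [mul_add, Finset.mul_sum, ← Finset.sum_add_distrib]
      _ = q ^ (L+2) * (-w * SS q w L (L+3) + SS q w (L+1) (L+3)) := by rw [step6]
  rw [step2, step5]
  ring


lemma T_zero : T 0 = 0 := rfl

lemma Texp1 (L j : ℕ) (h : 2*j ≤ L+1) :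
    T (L+1-2*j) + (2*j+1) = (L+2) + T (L-2*j) := by
  rcases Nat.lt_or_ge (2*j) (L+1) with h' | h'
  · obtain ⟨a, rfl⟩ : ∃ a, L = 2*j + a := ⟨L - 2*j, by omega⟩
    rw [show 2*j+a+1-2*j = a+1 from by omega, show 2*j+a-2*j = a from by omega, T_succ]
    omega
  · rw [show L+1-2*j = 0 from by omega, show L-2*j = 0 from by omega, T_zero]
    omega

lemma Texp2 (L j : ℕ) (h : 2*j ≤ L) :
    T (L-2*j-1) + (L-2*j) = T (L-2*j) := by
  rcases Nat.lt_or_ge (2*j) L with h' | h'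
  · obtain ⟨a, rfl⟩ : ∃ a, L = 2*j + (a+1) := ⟨L - 2*j - 1, by omega⟩
    rw [show 2*j+(a+1)-2*j-1 = a from by omega, show 2*j+(a+1)-2*j = a+1 from by omega,
      T_succ]
  · rw [show L-2*j-1 = 0 from by omega, show L-2*j = 0 from by omega, T_zero]

lemma Texp3 (L j : ℕ) (h : 2*j ≤ L+1) :
    T (L-2*j) + (L+1-2*j) = T (L+1-2*j) := by
  rcases Nat.lt_or_ge (2*j) (L+1) with h' | h'
  · obtain ⟨a, rfl⟩ : ∃ a, L = 2*j + a := ⟨L - 2*j, by omega⟩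
    rw [show 2*j+a-2*j = a from by omega, show 2*j+a+1-2*j = a+1 from by omega, T_succ]
  · rw [show L+1-2*j = 0 from by omega, show L-2*j = 0 from by omega, T_zero]

noncomputable def rt (q w : K) (L j : ℕ) : K :=
  qPoch (w * q^2) (q^2) j * q ^ T (L - 2*j - 1) * qbinom q ((L:ℤ) + 1) (2*(j:ℤ) + 1)

noncomputable def RR (q w : K) (L N : ℕ) : K := ∑ j ∈ Finset.range N, rt q w L j

noncomputable def wt (q w : K) (L j : ℕ) : K :=
  qPoch (w * q^2) (q^2) j * q ^ T (L+1-2*j) * qbinom q ((L:ℤ) + 1) (2*(j:ℤ))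

noncomputable def vt (q w : K) (L j : ℕ) : K :=
  qPoch (w * q^2) (q^2) j * q ^ T (L+1-2*j) * qbinom q ((L:ℤ) + 2) (2*(j:ℤ))

noncomputable def v1 (q w : K) (L j : ℕ) : K :=
  qPoch (w * q^2) (q^2) j * q ^ (T (L+1-2*j) + (L+2-2*j)) *
    qbinom q ((L:ℤ) + 1) (2*(j:ℤ) - 1)

noncomputable def ft (q w : K) (L j : ℕ) : K :=
  qPoch (w * q^2) (q^2) j * q ^ T (L - 2*j) * qbinom q ((L:ℤ) + 1) (2*(j:ℤ) + 1)

lemma R_rec (w : K) (L : ℕ) (hq : ∀ n, 1 ≤ n → n ≤ L + 3 → q ^ n ≠ 1) :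
    RR q w (L+2) (L+3)
      = (1 + q ^ (L+2)) * RR q w (L+1) (L+3) - w * q ^ (L+2) * RR q w L (L+3) := by
  have step1 : ∀ j ∈ Finset.range (L+3),
      rt q w (L+2) j = vt q w L j + q ^ (L+2) * rt q w (L+1) j := by
    intro j hj
    simp only [Finset.mem_range] at hj
    unfold rt vt
    rw [show ((L+2:ℕ):ℤ) + 1 = ((L+2:ℕ):ℤ) + 1 from rfl]
    have hpa := pascalA q (L+2) (2*j+1) (fun k hk1 hk2 => hq k hk1 (by omega))
    rw [show ((2*j+1:ℕ):ℤ) = 2*(j:ℤ)+1 from by push_cast; ring] at hpa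
    rw [hpa]
    rw [show (2*(j:ℤ)+1) - 1 = 2*(j:ℤ) from by ring]
    rw [show ((L+2:ℕ):ℤ) = (L:ℤ)+2 from by push_cast; ring]
    rw [show L+2-2*j-1 = L+1-2*j from by omega]
    rw [show L+1-2*j-1 = L-2*j from by omega]
    by_cases h2 : 2*j ≤ L+1
    · rw [show ((L+1:ℕ):ℤ)+1 = (L:ℤ)+2 from by push_cast; ring]
      have hT := Texp1 L j h2
      calc qPoch (w * q^2) (q^2) j * q ^ T (L+1-2*j) *
            (qbinom q ((L:ℤ)+2) (2*(j:ℤ)) + q ^ (2*j+1) * qbinom q ((L:ℤ)+2) (2*(j:ℤ)+1))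
          = qPoch (w * q^2) (q^2) j * q ^ T (L+1-2*j) * qbinom q ((L:ℤ)+2) (2*(j:ℤ))
            + qPoch (w * q^2) (q^2) j * q ^ (T (L+1-2*j) + (2*j+1)) *
              qbinom q ((L:ℤ)+2) (2*(j:ℤ)+1) := by rw [pow_add]; ring
        _ = _ := by rw [hT, pow_add]; ring
    · rw [show ((L+1:ℕ):ℤ)+1 = (L:ℤ)+2 from by push_cast; ring]
      rw [qbinom_eq_zero q (n := 2*(j:ℤ)+1) (m := (L:ℤ)+2) (by omega)]
      ring
  have step3 : ∀ j ∈ Finset.range (L+3), vt q w L j = v1 q w L j + wt q w L j := by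
    intro j hj
    unfold vt v1 wt
    have hpb := pascalB q (L+1) (2*j) (fun k hk1 hk2 => hq k hk1 (by omega))
    rw [show ((2*j:ℕ):ℤ) = 2*(j:ℤ) from by push_cast; ring] at hpb
    rw [show ((L+1:ℕ):ℤ) = (L:ℤ)+1 from by push_cast; ring] at hpb
    rw [show (L:ℤ)+2 = ((L:ℤ)+1) + 1 from by ring, hpb]
    rw [show L+1+1-2*j = L+2-2*j from by omega]
    rw [pow_add]
    ring
  have step4 : ∑ j ∈ Finset.range (L+3), v1 q w L j
      = ∑ j ∈ Finset.range (L+3), v1 q w L (j+1) := by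
    refine sum_shift ?_ ?_
    · unfold v1
      rw [qbinom_eq_zero q (n := 2*((0:ℕ):ℤ)-1) (m := (L:ℤ)+1) (by norm_num)]
      ring
    · unfold v1
      rw [qbinom_eq_zero q (n := 2*((L+3:ℕ):ℤ)-1) (m := (L:ℤ)+1) (by push_cast; omega)]
      ring
  have step5 : ∀ j ∈ Finset.range (L+3),
      v1 q w L (j+1) = ft q w L j - w * q ^ (L+2) * rt q w L j := by
    intro j hj
    unfold v1 ft rt
    rw [show (2*((j+1:ℕ):ℤ) - 1) = 2*(j:ℤ)+1 from by push_cast; ring]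
    rw [show L+1-2*(j+1) = L-2*j-1 from by omega]
    rw [show L+2-2*(j+1) = L-2*j from by omega]
    rw [qPoch_succ]
    by_cases h2 : 2*j ≤ L
    · have hT := Texp2 L j h2
      rw [← pow_mul]
      calc qPoch (w * q^2) (q^2) j * (1 - w * q^2 * q^(2*j)) *
            q ^ (T (L-2*j-1) + (L-2*j)) * qbinom q ((L:ℤ)+1) (2*(j:ℤ)+1)
          = qPoch (w * q^2) (q^2) j * q ^ (T (L-2*j-1) + (L-2*j)) *
              qbinom q ((L:ℤ)+1) (2*(j:ℤ)+1)
            - w * (qPoch (w * q^2) (q^2) j *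
                q ^ (T (L-2*j-1) + (L-2*j) + (2*j+2)) *
                qbinom q ((L:ℤ)+1) (2*(j:ℤ)+1)) := by
            rw [pow_add (a := q) (m := T (L-2*j-1) + (L-2*j)) (n := 2*j+2)]
            ring
        _ = _ := by
            rw [hT, show T (L-2*j) + (2*j+2) = (L+2) + T (L-2*j-1) from by omega, pow_add]
            ring
    · rw [qbinom_eq_zero q (n := 2*(j:ℤ)+1) (m := (L:ℤ)+1) (by omega)]
      ring
  have step6 : ∀ j ∈ Finset.range (L+3),
      rt q w (L+1) j = wt q w L j + ft q w L j := by
    intro j hj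
    unfold rt wt ft
    have hpb := pascalB q (L+1) (2*j+1) (fun k hk1 hk2 => hq k hk1 (by omega))
    rw [show ((2*j+1:ℕ):ℤ) = 2*(j:ℤ)+1 from by push_cast; ring] at hpb
    rw [show ((L+1:ℕ):ℤ) = (L:ℤ)+1 from by push_cast; ring] at hpb
    rw [show ((L+1:ℕ):ℤ)+1 = ((L:ℤ)+1)+1 from by push_cast; ring, hpb]
    rw [show (2*(j:ℤ)+1) - 1 = 2*(j:ℤ) from by ring]
    rw [show L+1-2*j-1 = L-2*j from by omega]
    rw [show L+1+1-(2*j+1) = L+1-2*j from by omega]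
    by_cases h2 : 2*j ≤ L+1
    · have hT := Texp3 L j h2
      rw [← hT, pow_add]
      ring
    · rw [qbinom_eq_zero q (n := 2*(j:ℤ)) (m := (L:ℤ)+1) (by omega)]
      ring
  calc RR q w (L+2) (L+3)
      = ∑ j ∈ Finset.range (L+3), (vt q w L j + q ^ (L+2) * rt q w (L+1) j) :=
        Finset.sum_congr rfl step1
    _ = ∑ j ∈ Finset.range (L+3), vt q w L j + q ^ (L+2) * RR q w (L+1) (L+3) := by
        unfold RR
        rw [Finset.sum_add_distrib, Finset.mul_sum]
    _ = (∑ j ∈ Finset.range (L+3), v1 q w L j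
          + ∑ j ∈ Finset.range (L+3), wt q w L j) + q ^ (L+2) * RR q w (L+1) (L+3) := by
        rw [← Finset.sum_add_distrib]
        rw [Finset.sum_congr rfl step3]
    _ = (∑ j ∈ Finset.range (L+3), (ft q w L j - w * q ^ (L+2) * rt q w L j)
          + ∑ j ∈ Finset.range (L+3), wt q w L j) + q ^ (L+2) * RR q w (L+1) (L+3) := by
        rw [step4, Finset.sum_congr rfl step5]
    _ = (∑ j ∈ Finset.range (L+3), (wt q w L j + ft q w L j))
          - w * q ^ (L+2) * RR q w L (L+3) + q ^ (L+2) * RR q w (L+1) (L+3) := by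
        unfold RR
        rw [Finset.sum_sub_distrib, Finset.sum_add_distrib, ← Finset.mul_sum]
        ring
    _ = RR q w (L+1) (L+3) - w * q ^ (L+2) * RR q w L (L+3)
          + q ^ (L+2) * RR q w (L+1) (L+3) := by
        rw [← Finset.sum_congr rfl step6]
        rfl
    _ = (1 + q ^ (L+2)) * RR q w (L+1) (L+3) - w * q ^ (L+2) * RR q w L (L+3) := by
        ring


lemma SS_ext (w : K) (L N : ℕ) (h : L + 1 ≤ N) : SS q w L N = SS q w L (L+1) := by
  unfold SS
  rw [← Finset.sum_subset (Finset.range_subset_range.mpr h) (fun j hjN hj => ?_)]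
  · refine Finset.sum_congr rfl fun j hj => ?_
    rw [← Finset.sum_subset (Finset.range_subset_range.mpr h) (fun i hiN hi => ?_)]
    simp only [Finset.mem_range, not_lt] at hi
    unfold st
    rw [qbinom_eq_zero q (n := (i:ℤ)) (m := (L:ℤ)-(j:ℤ)) (by omega)]
    ring
  · simp only [Finset.mem_range, not_lt] at hj
    refine Finset.sum_eq_zero fun i hi => ?_
    unfold st
    rw [qbinom_eq_zero q (n := (i:ℤ)) (m := (L:ℤ)-(j:ℤ)) (by omega)]
    ring

lemma RR_canon (w : K) (L N : ℕ) (h : L/2 + 1 ≤ N) :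
    RR q w L N = ∑ j ∈ Finset.range (L/2+1), rt q w L j := by
  unfold RR
  rw [← Finset.sum_subset (Finset.range_subset_range.mpr h) (fun j hjN hj => ?_)]
  simp only [Finset.mem_range, not_lt] at hj
  unfold rt
  rw [qbinom_eq_zero q (n := 2*(j:ℤ)+1) (m := (L:ℤ)+1) (by omega)]
  ring

lemma RR_ext (w : K) (L N : ℕ) (h : L + 1 ≤ N) : RR q w L N = RR q w L (L+1) := by
  rw [RR_canon q w L N (by omega), RR_canon q w L (L+1) (by omega)]

lemma base0 (w : K) (hq : ∀ n, 1 ≤ n → n ≤ 1 → q ^ n ≠ 1) :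
    SS q w 0 1 = RR q w 0 1 := by
  have q00 : qbinom q 0 0 = 1 := by
    rw [qbinom, if_pos ⟨le_rfl, le_rfl⟩]
    norm_num [qPoch]
  have q11 : qbinom q 1 1 = 1 := by
    have := qbinom_self q 1 (fun k h1 h2 => hq k h1 h2)
    simpa using this
  unfold SS RR st rt
  simp [Finset.sum_range_one, T_zero, q00, q11, qPoch_zero]

lemma base1 (w : K) (hq : ∀ n, 1 ≤ n → n ≤ 2 → q ^ n ≠ 1) :
    SS q w 1 2 = RR q w 1 2 := by
  have hq1 : (1:K) - q * q ^ 0 ≠ 0 := by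
    intro hc; exact hq 1 le_rfl (by omega) (by rw [pow_one]; linear_combination -hc)
  have q00 : qbinom q 0 0 = 1 := by
    rw [qbinom, if_pos ⟨le_rfl, le_rfl⟩]
    norm_num [qPoch]
  have q10 : qbinom q 1 0 = 1 := by
    have := qbinom_zero' q 1 (fun k h1 h2 => hq k h1 (by omega))
    simpa using this
  have q11 : qbinom q 1 1 = 1 := by
    have := qbinom_self q 1 (fun k h1 h2 => hq k h1 (by omega))
    simpa using this
  have q01 : qbinom q 0 1 = 0 := qbinom_eq_zero q (by omega)
  have hq1' : (1:K) - q ≠ 0 := by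
    intro hc; exact hq 1 le_rfl (by omega) (by rw [pow_one]; linear_combination -hc)
  have e1 : qPoch q q 1 = 1 - q := by
    rw [show (1:ℕ) = 0+1 from rfl, qPoch_succ, qPoch_zero]; ring
  have e2 : qPoch q q 2 = (1 - q) * (1 - q*q) := by
    rw [show (2:ℕ) = 0+1+1 from rfl, qPoch_succ, qPoch_succ, qPoch_zero]; ring
  have q21 : qbinom q 2 1 = 1 + q := by
    have h := qbinom_nat q 2 1 (by omega)
    rw [show ((2:ℕ):ℤ) = (2:ℤ) from by norm_num, show ((1:ℕ):ℤ) = (1:ℤ) from by norm_num] at h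
    rw [h, show (2:ℕ) - 1 = 1 from rfl, e2, e1, div_eq_iff (mul_ne_zero hq1' hq1')]
    ring
  have q23 : qbinom q 2 3 = 0 := qbinom_eq_zero q (by omega)
  unfold SS RR st rt
  simp only [Finset.sum_range_succ, Finset.sum_range_zero]
  norm_num [T_zero, q00, q10, q11, q01, q21, q23, qPoch_zero, show T 1 = 1 from rfl]

lemma key (w : K) : ∀ L : ℕ, (∀ n, 1 ≤ n → n ≤ L + 1 → q ^ n ≠ 1) →
    SS q w L (L+1) = RR q w L (L+1) := by
  intro L
  induction L using Nat.strong_induction_on with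
  | _ L ih =>
    match L with
    | 0 => exact fun hq => base0 q w hq
    | 1 => exact fun hq => base1 q w hq
    | (M+2) =>
      intro hq
      have ih1 : SS q w (M+1) (M+2) = RR q w (M+1) (M+2) :=
        ih (M+1) (by omega) (fun n h1 h2 => hq n h1 (by omega))
      have ih0 : SS q w M (M+1) = RR q w M (M+1) :=
        ih M (by omega) (fun n h1 h2 => hq n h1 (by omega))
      have hS := S_rec q w M (fun n h1 h2 => hq n h1 (by omega))
      have hR := R_rec q w M (fun n h1 h2 => hq n h1 (by omega))
      have e1 : SS q w (M+2) (M+2+1) = SS q w (M+2) (M+3) := by norm_num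
      have e2 : RR q w (M+2) (M+2+1) = RR q w (M+2) (M+3) := by norm_num
      rw [e1, e2, hS, hR,
        SS_ext q w (M+1) (M+3) (by omega), SS_ext q w M (M+3) (by omega),
        RR_ext q w (M+1) (M+3) (by omega), RR_ext q w M (M+3) (by omega),
        ih1, ih0]

end Field


/-- Andrews's polynomial version of Lebesgue's identity. -/
theorem stmt12 {K : Type*} [Field K] (L : ℕ) (z q : K)
    (hq : ∀ n : ℕ, 1 ≤ n → n ≤ L + 1 → q ^ n ≠ 1) :
    ∑ i ∈ Finset.range (L + 1), ∑ j ∈ Finset.range (L + 1),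
        q ^ (T i + T j) * (-z ^ 2) ^ j *
          qbinom q ((L : ℤ) - j) i * qbinom q (i : ℤ) (j : ℤ)
      = ∑ j ∈ Finset.range (L / 2 + 1),
          qPoch (z ^ 2 * q ^ 2) (q ^ 2) j * q ^ T (L - 2 * j - 1) *
            qbinom q ((L : ℤ) + 1) (2 * (j : ℤ) + 1) := by
  calc (∑ i ∈ Finset.range (L + 1), ∑ j ∈ Finset.range (L + 1),
        q ^ (T i + T j) * (-z ^ 2) ^ j *
          qbinom q ((L : ℤ) - j) i * qbinom q (i : ℤ) (j : ℤ))
      = SS q (z^2) L (L+1) := by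
        rw [Finset.sum_comm]
        rfl
    _ = RR q (z^2) L (L+1) := key q (z^2) L hq
    _ = ∑ j ∈ Finset.range (L/2+1), rt q (z^2) L j := RR_canon q (z^2) L (L+1) (by omega)
    _ = _ := rfl
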